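/- Let B = {e_k} be a quasi-greedy basis with quasi-greedy constant K in a real Banach space X. Suppose there exist C₂ > 0 and a function η: ℕ → (0,∞) such that (1/C₂)·η(|Γ|) ≤ ‖Σ_{k∈Γ} e_k‖ for all finite Γ ⊂ ℕ. Then for every x = Σ_k a_k(x) e_k ∈ X, sup_k a_k*(x) η(k) ≤ 4C₂K³ ‖x‖, where (a_k*(x)) is the decreasing rearrangement of (|a_k(x)|). -/

import Mathlib

open Finset Filter

/-- A (seminormalized Schauder) basis of a real normed space, given by the basis
vectors `e k` together with the coefficient functionals `coeff k`. -/
structure QGBasis (X : Type*) [NormedAddCommGroup X] [NormedSpace ℝ X] where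
  e : ℕ → X
  coeff : ℕ → X → ℝ
  coeff_add : ∀ k x y, coeff k (x + y) = coeff k x + coeff k y
  coeff_smul : ∀ (k : ℕ) (c : ℝ) (x : X), coeff k (c • x) = c * coeff k x
  coeff_e : ∀ j k, coeff j (e k) = if j = k then 1 else 0
  expansion : ∀ x : X,
    Tendsto (fun N => ∑ k ∈ Finset.range N, coeff k x • e k) atTop (nhds x)
  c_norm : ℝ
  C_norm : ℝ
  c_norm_pos : 0 < c_norm
  norm_e_ge : ∀ k, c_norm ≤ ‖e k‖
  norm_e_le : ∀ k, ‖e k‖ ≤ C_norm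

namespace QGBasis

variable {X : Type*} [NormedAddCommGroup X] [NormedSpace ℝ X] (B : QGBasis X)

/-- `π` enumerates the coefficients of `x` in decreasing order of modulus;
position `k` (zero-based) carries the `(k+1)`-st largest coefficient. -/
def IsGreedyPerm (x : X) (π : ℕ → ℕ) : Prop :=
  Function.Bijective π ∧ ∀ k, |B.coeff (π (k + 1)) x| ≤ |B.coeff (π k) x|

/-- The thresholding greedy approximation of order `N` associated to the
greedy enumeration `π`. -/
def G (π : ℕ → ℕ) (N : ℕ) (x : X) : X :=
  ∑ k ∈ Finset.range N, B.coeff (π k) x • B.e (π k)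

/-- `B` is quasi-greedy with constant `K`. -/
def QuasiGreedyWith (K : ℝ) : Prop :=
  ∀ (x : X) (π : ℕ → ℕ), B.IsGreedyPerm x π → ∀ N,
    ‖B.G π N x‖ ≤ K * ‖x‖ ∧ ‖x - B.G π N x‖ ≤ K * ‖x‖

/-- Coordinate projection onto the index set `Γ`. -/
def S (Γ : Finset ℕ) (x : X) : X := ∑ k ∈ Γ, B.coeff k x • B.e k

/-- Right democracy function. -/
noncomputable def hr (N : ℕ) : ℝ :=
  sSup {r | ∃ Γ : Finset ℕ, Γ.card = N ∧ r = ‖∑ k ∈ Γ, B.e k‖}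

/-- Left democracy function. -/
noncomputable def hl (N : ℕ) : ℝ :=
  sInf {r | ∃ Γ : Finset ℕ, Γ.card = N ∧ r = ‖∑ k ∈ Γ, B.e k‖}

/-- The democracy ratio `μ(N) = sup_{1 ≤ k ≤ N} h_r(k)/h_l(k)`. -/
noncomputable def mu (N : ℕ) : ℝ :=
  sSup {r | ∃ k, 1 ≤ k ∧ k ≤ N ∧ r = B.hr k / B.hl k}

/-- Best `N`-term approximation error. -/
noncomputable def sigma (N : ℕ) (x : X) : ℝ :=
  sInf {r | ∃ (Γ : Finset ℕ) (b : ℕ → ℝ),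
    Γ.card ≤ N ∧ r = ‖x - ∑ k ∈ Γ, b k • B.e k‖}

/-- `Γ` is a greedy set for `x`: every coefficient inside dominates every
coefficient outside. -/
def IsGreedySet (x : X) (Γ : Finset ℕ) : Prop :=
  ∀ j ∈ Γ, ∀ i ∉ Γ, |B.coeff i x| ≤ |B.coeff j x|

end QGBasis

/-!
Let `a` be the `(k+1)`-st largest coefficient of `x`, `Γ` the greedy set of size `k+1` and
`z = ∑_{j ∈ Γ} sign(a_j(x)) e_j`. Abel summation writes `z` through the greedy sums `G_m x`
with increasing weights `|a_{π i}(x)|⁻¹ ≤ a⁻¹`, so `a ‖z‖ ≤ 2K ‖x‖`. Enumerating first the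
indices where `z` has coefficient `1`, a greedy sum of `z` is `1_A` and `1_Γ = G(z) - (z - G(z))`,
so `‖1_Γ‖ ≤ 2K ‖z‖`. Hence `a η(k+1) ≤ C₂ a ‖1_Γ‖ ≤ 4 C₂ K² ‖x‖`, and `K ≥ 1`.
-/

theorem List.Nodup.exists_perm_getElem {l : List ℕ} (hl : l.Nodup) :
    ∃ σ : Equiv.Perm ℕ, ∀ i (h : i < l.length), σ i = l[i] := by
  classical
  have : Infinite {i // ¬ i < l.length} :=
    Set.infinite_coe_iff.2 (Set.finite_lt_nat l.length).infinite_compl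
  have : Infinite {j // j ∉ l} :=
    Set.infinite_coe_iff.2 (l.finite_toSet.infinite_compl)
  refine ⟨Equiv.subtypeCongr (Fin.equivSubtype.symm.trans (hl.getEquiv l))
    nonempty_equiv_of_countable.some, fun i h => ?_⟩
  simp [Equiv.subtypeCongr, Equiv.sumCompl, h, List.Nodup.getEquiv]

theorem image_range_eq_toFinset_take {α : Type*} [DecidableEq α] {l : List α} {σ : ℕ → α}
    (hσ : ∀ i (h : i < l.length), σ i = l[i]) {m : ℕ} (hm : m ≤ l.length) :
    (range m).image σ = (l.take m).toFinset := by
  ext j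
  simp only [mem_image, mem_range, List.mem_toFinset, List.mem_take_iff_getElem]
  constructor
  · rintro ⟨i, hi, rfl⟩
    exact ⟨i, by omega, (hσ i (by omega)).symm⟩
  · rintro ⟨i, hi, rfl⟩
    exact ⟨i, by omega, hσ i (by omega)⟩

theorem Finset.exists_perm_image_range_eq_of_subset {A Γ : Finset ℕ} (hAΓ : A ⊆ Γ) :
    ∃ σ : Equiv.Perm ℕ, (range #A).image σ = A ∧ (range #Γ).image σ = Γ := by
  classical
  set l := A.sort (· ≤ ·) ++ (Γ \ A).sort (· ≤ ·)
  have hl : l.Nodup := (sort_nodup _ _).append (sort_nodup _ _) fun a ha hb =>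
    (mem_sdiff.1 ((mem_sort _).1 hb)).2 ((mem_sort _).1 ha)
  have hlen : l.length = #Γ := by
    simp [l, card_sdiff_of_subset hAΓ, card_le_card hAΓ]
  obtain ⟨σ, hσ⟩ := hl.exists_perm_getElem
  refine ⟨σ, ?_, ?_⟩
  · rw [image_range_eq_toFinset_take hσ (by rw [hlen]; exact card_le_card hAΓ)]
    simp [l]
  · rw [image_range_eq_toFinset_take hσ hlen.ge, ← hlen, List.take_length]
    ext j
    simpa [l] using @hAΓ j

theorem abs_coe_sign_of_ne_zero {α : Type*} [Ring α] [LinearOrder α] [IsStrictOrderedRing α]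
    {a : α} (ha : a ≠ 0) : |(SignType.sign a : α)| = 1 := by
  rcases ha.lt_or_gt with h | h <;> simp [h, sign_neg, sign_pos]

theorem norm_sum_range_smul_le_of_monotone {E : Type*} [SeminormedAddCommGroup E]
    [NormedSpace ℝ E] (f : ℕ → ℝ) (g : ℕ → E) (n : ℕ) {M : ℝ} (hf0 : 0 ≤ f 0)
    (hf : ∀ i < n, f i ≤ f (i + 1)) (hg : ∀ m, ‖∑ i ∈ range m, g i‖ ≤ M) :
    ‖∑ i ∈ range (n + 1), f i • g i‖ ≤ 2 * f n * M := by
  have hM : 0 ≤ M := by simpa using hg 0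
  have hincr : ∀ i ∈ range n, 0 ≤ f (i + 1) - f i := fun i hi =>
    sub_nonneg.2 (hf i (mem_range.1 hi))
  have htel : ∑ i ∈ range n, (f (i + 1) - f i) = f n - f 0 := sum_range_sub f n
  have hfn : f 0 ≤ f n := sub_nonneg.1 (htel ▸ sum_nonneg hincr)
  rw [sum_range_by_parts, Nat.add_sub_cancel]
  calc ‖f n • ∑ i ∈ range (n + 1), g i -
        ∑ i ∈ range n, (f (i + 1) - f i) • ∑ j ∈ range (i + 1), g j‖
      ≤ f n * M + ∑ i ∈ range n, (f (i + 1) - f i) * M := by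
        refine (norm_sub_le _ _).trans (add_le_add ?_ ((norm_sum_le _ _).trans ?_))
        · rw [norm_smul, Real.norm_of_nonneg (hf0.trans hfn)]
          exact mul_le_mul_of_nonneg_left (hg _) (hf0.trans hfn)
        · refine sum_le_sum fun i hi => ?_
          rw [norm_smul, Real.norm_of_nonneg (hincr i hi)]
          exact mul_le_mul_of_nonneg_left (hg _) (hincr i hi)
    _ = (2 * f n - f 0) * M := by rw [← sum_mul, htel]; ring
    _ ≤ 2 * f n * M := by nlinarith

namespace QGBasis

variable {X : Type*} [NormedAddCommGroup X] [NormedSpace ℝ X] (B : QGBasis X)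

theorem coeff_sum {ι : Type*} (j : ℕ) (s : Finset ι) (f : ι → X) :
    B.coeff j (∑ i ∈ s, f i) = ∑ i ∈ s, B.coeff j (f i) :=
  map_sum (AddMonoidHom.mk' (B.coeff j) (B.coeff_add j)) f s

theorem coeff_sum_smul_e (Γ : Finset ℕ) (c : ℕ → ℝ) (j : ℕ) :
    B.coeff j (∑ k ∈ Γ, c k • B.e k) = if j ∈ Γ then c j else 0 := by
  simp only [coeff_sum, coeff_smul, coeff_e, mul_ite, mul_one, mul_zero, sum_ite_eq]

theorem one_le_of_quasiGreedyWith {K : ℝ} (hK : B.QuasiGreedyWith K) : 1 ≤ K := by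
  have hgreedy : B.IsGreedyPerm (B.e 0) id := by
    refine ⟨Function.bijective_id, fun k => ?_⟩
    rcases k with _ | k <;> simp [coeff_e]
  have hG : B.G id 1 (B.e 0) = B.e 0 := by simp [G, coeff_e]
  have h := (hK (B.e 0) id hgreedy 1).1
  rw [hG] at h
  have he : 0 < ‖B.e 0‖ := B.c_norm_pos.trans_le (B.norm_e_ge 0)
  nlinarith

theorem IsGreedyPerm.antitone {B : QGBasis X} {x : X} {π : ℕ → ℕ} (hπ : B.IsGreedyPerm x π) :
    Antitone fun i => |B.coeff (π i) x| :=
  antitone_nat_of_succ_le hπ.2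

theorem IsGreedyPerm.coeff_ne_zero_of_le {B : QGBasis X} {x : X} {π : ℕ → ℕ}
    (hπ : B.IsGreedyPerm x π) {i k : ℕ} (hk : B.coeff (π k) x ≠ 0) (hik : i ≤ k) :
    B.coeff (π i) x ≠ 0 :=
  abs_pos.1 ((abs_pos.2 hk).trans_le (hπ.antitone hik))

theorem G_eq_S {π : ℕ → ℕ} (hπ : Function.Injective π) (N : ℕ) (x : X) :
    B.G π N x = B.S ((range N).image π) x := by
  rw [S, sum_image hπ.injOn]
  rfl

theorem isGreedyPerm_sum_smul_e {Γ : Finset ℕ} {ε : ℕ → ℝ} (hε : ∀ j ∈ Γ, |ε j| = 1)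
    {σ : Equiv.Perm ℕ} (hσ : (range #Γ).image σ = Γ) :
    B.IsGreedyPerm (∑ j ∈ Γ, ε j • B.e j) σ := by
  have hmem : ∀ i, σ i ∈ Γ ↔ i < #Γ := fun i => by
    simpa only [hσ, mem_range] using σ.injective.mem_finset_image (s := range #Γ) (a := i)
  refine ⟨σ.bijective, fun i => ?_⟩
  simp only [coeff_sum_smul_e]
  by_cases hi : σ (i + 1) ∈ Γ
  · have hi' : σ i ∈ Γ := (hmem i).2 (by have := (hmem _).1 hi; omega)
    simp [hi, hi', hε]
  · simp [hi]

theorem norm_sum_e_le_of_abs_eq_one {K : ℝ} (hK : B.QuasiGreedyWith K) {Γ : Finset ℕ}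
    {ε : ℕ → ℝ} (hε : ∀ j ∈ Γ, |ε j| = 1) :
    ‖∑ j ∈ Γ, B.e j‖ ≤ 2 * K * ‖∑ j ∈ Γ, ε j • B.e j‖ := by
  classical
  set z := ∑ j ∈ Γ, ε j • B.e j
  set A := Γ.filter (ε · = 1)
  have hAΓ : A ⊆ Γ := filter_subset _ _
  have hneg : ∀ j ∈ Γ \ A, ε j = -1 := fun j hj => by
    obtain ⟨hjΓ, hjA⟩ := mem_sdiff.1 hj
    rcases (abs_eq zero_le_one).1 (hε j hjΓ) with h | h
    · exact absurd (mem_filter.2 ⟨hjΓ, h⟩) hjA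
    · exact h
  obtain ⟨σ, hσA, hσΓ⟩ := exists_perm_image_range_eq_of_subset hAΓ
  have hgreedy := B.isGreedyPerm_sum_smul_e hε hσΓ
  have hGA : B.G σ #A z = ∑ j ∈ A, B.e j := by
    rw [G_eq_S _ σ.injective, hσA, S]
    refine sum_congr rfl fun j hj => ?_
    rw [coeff_sum_smul_e, if_pos (hAΓ hj), (mem_filter.1 hj).2, one_smul]
  have hz : z = -∑ j ∈ Γ \ A, B.e j + ∑ j ∈ A, B.e j := by
    simp only [z]
    rw [← sum_sdiff hAΓ, ← sum_neg_distrib]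
    congr 1
    · exact sum_congr rfl fun j hj => by rw [hneg j hj, neg_one_smul]
    · exact sum_congr rfl fun j hj => by rw [(mem_filter.1 hj).2, one_smul]
  have hsplit : ∑ j ∈ Γ, B.e j = B.G σ #A z - (z - B.G σ #A z) := by
    rw [← sum_sdiff hAΓ, hGA, hz]
    abel
  rw [hsplit]
  linarith [norm_sub_le (B.G σ #A z) (z - B.G σ #A z), hK z σ hgreedy #A]

theorem abs_coeff_mul_norm_sum_sign_smul_e_le {K : ℝ} (hK : B.QuasiGreedyWith K) {x : X}
    {π : ℕ → ℕ} (hπ : B.IsGreedyPerm x π) {n : ℕ} (hn : B.coeff (π n) x ≠ 0) :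
    |B.coeff (π n) x| * ‖∑ i ∈ range (n + 1), (SignType.sign (B.coeff (π i) x) : ℝ) • B.e (π i)‖
      ≤ 2 * K * ‖x‖ := by
  have hpos : ∀ i ≤ n, 0 < |B.coeff (π i) x| := fun i hi =>
    abs_pos.2 (hπ.coeff_ne_zero_of_le hn hi)
  have hsign : ∀ i ∈ range (n + 1), (SignType.sign (B.coeff (π i) x) : ℝ) • B.e (π i) =
      |B.coeff (π i) x|⁻¹ • B.coeff (π i) x • B.e (π i) := fun i hi => by
    rw [smul_smul]
    congr 1
    have := hpos i (Nat.lt_succ_iff.1 (mem_range.1 hi))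
    field_simp
    exact sign_mul_abs (B.coeff (π i) x)
  have habel := norm_sum_range_smul_le_of_monotone (fun i => |B.coeff (π i) x|⁻¹)
    (fun i => B.coeff (π i) x • B.e (π i)) n (inv_nonneg.2 (abs_nonneg _))
    (fun i hi => inv_anti₀ (hpos (i + 1) hi) (hπ.2 i)) (fun m => (hK x π hπ m).1)
  rw [sum_congr rfl hsign]
  calc |B.coeff (π n) x| *
        ‖∑ i ∈ range (n + 1), |B.coeff (π i) x|⁻¹ • B.coeff (π i) x • B.e (π i)‖
      ≤ |B.coeff (π n) x| * (2 * |B.coeff (π n) x|⁻¹ * (K * ‖x‖)) :=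
        mul_le_mul_of_nonneg_left habel (abs_nonneg _)
    _ = 2 * K * ‖x‖ := by field_simp [(hpos n le_rfl).ne']

end QGBasis

theorem stmt2_general {X : Type*} [NormedAddCommGroup X] [NormedSpace ℝ X]
    (B : QGBasis X) (K : ℝ) (hK : B.QuasiGreedyWith K)
    (η : ℕ → ℝ)
    (C₂ : ℝ) (hC₂ : 0 < C₂)
    (hlow : ∀ Γ : Finset ℕ, (1 / C₂) * η Γ.card ≤ ‖∑ k ∈ Γ, B.e k‖)
    (x : X) (π : ℕ → ℕ) (hπ : B.IsGreedyPerm x π) :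
    ∀ k : ℕ, |B.coeff (π k) x| * η (k + 1) ≤ C₂ * (4 * K ^ 3) * ‖x‖ := by
  intro k
  have hK1 : 1 ≤ K := B.one_le_of_quasiGreedyWith hK
  by_cases hk : B.coeff (π k) x = 0
  · rw [hk, abs_zero, zero_mul]
    positivity
  set Γ := (range (k + 1)).image π
  set z := ∑ j ∈ Γ, (SignType.sign (B.coeff j x) : ℝ) • B.e j
  have hz : |B.coeff (π k) x| * ‖z‖ ≤ 2 * K * ‖x‖ := by
    simp only [z, Γ]
    rw [sum_image hπ.1.1.injOn]
    exact B.abs_coeff_mul_norm_sum_sign_smul_e_le hK hπ hk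
  have hΓ : ‖∑ j ∈ Γ, B.e j‖ ≤ 2 * K * ‖z‖ := by
    refine B.norm_sum_e_le_of_abs_eq_one hK ?_
    simp only [Γ, forall_mem_image, mem_range]
    exact fun i hi => abs_coe_sign_of_ne_zero (hπ.coeff_ne_zero_of_le hk (Nat.lt_succ_iff.1 hi))
  have hη : η (k + 1) ≤ C₂ * ‖∑ j ∈ Γ, B.e j‖ := by
    have h := hlow Γ
    rwa [card_image_of_injective _ hπ.1.1, card_range, one_div, inv_mul_le_iff₀ hC₂] at h
  calc |B.coeff (π k) x| * η (k + 1) ≤ |B.coeff (π k) x| * (C₂ * (2 * K * ‖z‖)) := by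
        gcongr
        exact hη.trans (mul_le_mul_of_nonneg_left hΓ hC₂.le)
    _ = C₂ * (2 * K) * (|B.coeff (π k) x| * ‖z‖) := by ring
    _ ≤ C₂ * (2 * K) * (2 * K * ‖x‖) := by gcongr
    _ = C₂ * (4 * K ^ 2) * ‖x‖ := by ring
    _ ≤ C₂ * (4 * K ^ 3) * ‖x‖ := by gcongr; norm_num

/-- lower democracy estimates control the decreasing rearrangement
(Lemma 2.2): `sup_k a_k*(x) η(k) ≤ 4 C₂ K³ ‖x‖`, stated as a bound for every
`k` (position `k` of `π` carries the `(k+1)`-st largest coefficient). -/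
theorem stmt2 {X : Type*} [NormedAddCommGroup X] [NormedSpace ℝ X] [CompleteSpace X]
    (B : QGBasis X) (K : ℝ) (hK : B.QuasiGreedyWith K)
    (η : ℕ → ℝ) (hηpos : ∀ k, 1 ≤ k → 0 < η k)
    (C₂ : ℝ) (hC₂ : 0 < C₂)
    (hlow : ∀ Γ : Finset ℕ, (1 / C₂) * η Γ.card ≤ ‖∑ k ∈ Γ, B.e k‖)
    (x : X) (π : ℕ → ℕ) (hπ : B.IsGreedyPerm x π) :
    ∀ k : ℕ, |B.coeff (π k) x| * η (k + 1) ≤ C₂ * (4 * K ^ 3) * ‖x‖ :=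
  stmt2_general B K hK η C₂ hC₂ hlow x π hπ
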